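/- Let V be a nonempty vertical path whose final step is S, and let H be a horizontal path. Then for every integer k, the number of shuffles of V and H whose shifted In-Vert equals k is the same as the number of shuffles of V and H whose signed peak-count equals k. -/

import Mathlib

inductive Step : Type
  | E | W | N | S
deriving DecidableEq, Repr

open Step

/-- A step is vertical (North or South). -/
def isVert : Step → Bool
  | N => true
  | S => true
  | _ => false

/-- A step is horizontal (East or West). -/
def isHoriz : Step → Bool
  | E => true
  | W => true
  | _ => false

/-- `σ` is a shuffle (interleaving) of the vertical path `V` and horizontal path `H`:
its subsequence of vertical steps is `V` and its subsequence of horizontal steps is `H`. -/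
def IsShuffle (V H σ : List Step) : Prop :=
  σ.filter isVert = V ∧ σ.filter isHoriz = H

/-- The list of adjacent pairs `(σ_i, σ_{i+1})` of a list. -/
def pairs (σ : List Step) : List (Step × Step) := σ.zip σ.tail

/-- Signed peak-count: (# of (N,W) adjacent pairs) − (# of (E,S) adjacent pairs). -/
def signedPeak (σ : List Step) : ℤ :=
  (((pairs σ).filter (fun p => decide (p.1 = N ∧ p.2 = W))).length : ℤ)
  - (((pairs σ).filter (fun p => decide (p.1 = E ∧ p.2 = S))).length : ℤ)

/-- Peak-count: (# of (N,W) adjacent pairs) + (# of (E,S) adjacent pairs). -/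
def peakCount (σ : List Step) : ℕ :=
  ((pairs σ).filter (fun p => decide (p.1 = N ∧ p.2 = W))).length
  + ((pairs σ).filter (fun p => decide (p.1 = E ∧ p.2 = S))).length

/-- Binomial coefficient with integer arguments, equal to 0 unless `0 ≤ b ≤ a`. -/
def zch (a b : ℤ) : ℕ := if 0 ≤ b ∧ b ≤ a then a.toNat.choose b.toNat else 0

/-- In-Vert of `σ`: the number of indices `j ≥ 1` such that `σ_j` is vertical and either
`j = 1` or `σ_{j−1}` is an inward step (inward steps are `{W, S}`).  This corresponds to
viewing `σ` as preceded by a virtual zeroth inward step and counting occurrences of an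
inward step immediately followed by a vertical step. -/
def invert (σ : List Step) : ℕ :=
  (if σ.head? = some Step.N ∨ σ.head? = some Step.S then 1 else 0)
  + ((pairs σ).filter (fun p => decide ((p.1 = Step.W ∨ p.1 = Step.S) ∧ (p.2 = Step.N ∨ p.2 = Step.S)))).length

/-!
Let `t_f(X, Y) = ∑ T ^ f σ ∈ ℤ[T;T⁻¹]`, summed over the shuffles `σ` of `X` and `Y`. Both
statistics are local: prepending a step `a` to a path starting with `b` changes them by an amount
`δ a b` that vanishes when `a` and `b` are both vertical or both horizontal. Sorting the shuffles
of `x :: X` and `y :: Y` by their first two steps then gives, for either statistic,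
`t(x :: X, y :: Y) = t(X, y :: Y) + t(x :: X, Y) + c(x, y) t(X, Y)` with the same correction
`c = cornerWeight`: it comes from the peak `N W` and the valley `E S`. The shifted In-Vert also
changes at the corners `N E` and `E N`, but those two contributions cancel. On a single vertical or
horizontal path both statistics vanish (for the vertical path because it does not end in `N`), so
the two generating functions agree by induction, and so do their coefficients.
-/

namespace List

variable {α : Type*}

def shuffles : List α → List α → List (List α)
  | [], l₂ => [l₂]
  | a :: l₁, [] => [a :: l₁]
  | a :: l₁, b :: l₂ =>
    (shuffles l₁ (b :: l₂)).map (a :: ·) ++ (shuffles (a :: l₁) l₂).map (b :: ·)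
termination_by l₁ l₂ => l₁.length + l₂.length

@[simp] theorem nil_shuffles (l : List α) : shuffles [] l = [l] := by
  rw [shuffles]

@[simp] theorem shuffles_nil (l : List α) : shuffles l [] = [l] := by
  cases l <;> rw [shuffles]

theorem cons_shuffles_cons (a b : α) (l₁ l₂ : List α) :
    shuffles (a :: l₁) (b :: l₂) =
      (shuffles l₁ (b :: l₂)).map (a :: ·) ++ (shuffles (a :: l₁) l₂).map (b :: ·) := by
  rw [shuffles]

theorem cons_mem_cons_shuffles {l₁ l₂ σ : List α} (a : α) (h : σ ∈ shuffles l₁ l₂) :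
    a :: σ ∈ shuffles (a :: l₁) l₂ := by
  cases l₂ with
  | nil => simp_all
  | cons b l₂ => rw [cons_shuffles_cons]; exact mem_append_left _ (mem_map_of_mem h)

theorem cons_mem_shuffles_cons {l₁ l₂ σ : List α} (b : α) (h : σ ∈ shuffles l₁ l₂) :
    b :: σ ∈ shuffles l₁ (b :: l₂) := by
  cases l₁ with
  | nil => simp_all
  | cons a l₁ => rw [cons_shuffles_cons]; exact mem_append_right _ (mem_map_of_mem h)

theorem mem_shuffles_filter (p : α → Bool) (σ : List α) :
    σ ∈ shuffles (σ.filter p) (σ.filter fun a => !p a) := by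
  induction σ with
  | nil => simp
  | cons c σ ih =>
    cases hc : p c
    · simpa [filter_cons, hc] using cons_mem_shuffles_cons c ih
    · simpa [filter_cons, hc] using cons_mem_cons_shuffles c ih

theorem filter_eq_of_mem_shuffles {p : α → Bool} {l₁ l₂ σ : List α} (h₁ : ∀ a ∈ l₁, p a)
    (h₂ : ∀ a ∈ l₂, p a = false) (h : σ ∈ shuffles l₁ l₂) :
    σ.filter p = l₁ ∧ σ.filter (fun a => !p a) = l₂ := by
  induction l₁, l₂ using shuffles.induct generalizing σ with
  | case1 l₂ =>
    obtain rfl := mem_singleton.1 (by simpa using h)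
    exact ⟨filter_eq_nil_iff.2 (by simpa using h₂), filter_eq_self.2 (by simpa using h₂)⟩
  | case2 a l₁ =>
    obtain rfl := mem_singleton.1 (by simpa using h)
    exact ⟨filter_eq_self.2 h₁, filter_eq_nil_iff.2 (by simpa using h₁)⟩
  | case3 a l₁ b l₂ ih₁ ih₂ =>
    simp only [forall_mem_cons] at h₁ h₂
    rw [cons_shuffles_cons, mem_append, mem_map, mem_map] at h
    rcases h with ⟨τ, hτ, rfl⟩ | ⟨τ, hτ, rfl⟩
    · obtain ⟨e₁, e₂⟩ := ih₁ h₁.2 (by simpa using h₂) hτ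
      simp [h₁.1, e₁, e₂]
    · obtain ⟨e₁, e₂⟩ := ih₂ (by simpa using h₁) h₂.2 hτ
      simp [h₂.1, e₁, e₂]

theorem mem_shuffles_iff {p : α → Bool} {l₁ l₂ σ : List α} (h₁ : ∀ a ∈ l₁, p a)
    (h₂ : ∀ a ∈ l₂, p a = false) :
    σ ∈ shuffles l₁ l₂ ↔ σ.filter p = l₁ ∧ σ.filter (fun a => !p a) = l₂ :=
  ⟨filter_eq_of_mem_shuffles h₁ h₂, by rintro ⟨rfl, rfl⟩; exact mem_shuffles_filter p σ⟩

theorem nodup_shuffles {l₁ l₂ : List α} (h : ∀ a ∈ l₁, ∀ b ∈ l₂, a ≠ b) :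
    (shuffles l₁ l₂).Nodup := by
  induction l₁, l₂ using shuffles.induct with
  | case1 | case2 => simp
  | case3 a l₁ b l₂ ih₁ ih₂ =>
    rw [cons_shuffles_cons]
    refine ((ih₁ fun c hc d hd => h c (mem_cons_of_mem _ hc) d hd).map cons_injective).append
      ((ih₂ fun c hc d hd => h c hc d (mem_cons_of_mem _ hd)).map cons_injective) ?_
    simp only [disjoint_iff_ne, mem_map]
    rintro _ ⟨σ, -, rfl⟩ _ ⟨τ, -, rfl⟩ e
    exact h a mem_cons_self b mem_cons_self (cons.inj e).1

theorem head?_of_mem_shuffles_cons {l₁ l₂ σ : List α} {b : α}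
    (h : σ ∈ shuffles l₁ (b :: l₂)) : σ.head? = some b ∨ ∃ a ∈ l₁, σ.head? = some a := by
  cases l₁ with
  | nil => simp_all
  | cons a l₁ =>
    rw [cons_shuffles_cons, mem_append, mem_map, mem_map] at h
    rcases h with ⟨τ, -, rfl⟩ | ⟨τ, -, rfl⟩ <;> simp

theorem head?_of_mem_cons_shuffles {l₁ l₂ σ : List α} {a : α}
    (h : σ ∈ shuffles (a :: l₁) l₂) : σ.head? = some a ∨ ∃ b ∈ l₂, σ.head? = some b := by
  cases l₂ with
  | nil => simp_all
  | cons b l₂ =>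
    rw [cons_shuffles_cons, mem_append, mem_map, mem_map] at h
    rcases h with ⟨τ, -, rfl⟩ | ⟨τ, -, rfl⟩ <;> simp

variable [DecidableEq α]

theorem filter_head?_shuffles_cons {l₁ l₂ : List α} {b : α} (hb : b ∉ l₁) :
    (shuffles l₁ (b :: l₂)).filter (·.head? = some b) = (shuffles l₁ l₂).map (b :: ·) := by
  cases l₁ with
  | nil => simp
  | cons a l₁ =>
    simp [cons_shuffles_cons, filter_append, filter_map, Function.comp_def,
      ne_of_mem_of_not_mem mem_cons_self hb]

theorem filter_head?_cons_shuffles {l₁ l₂ : List α} {a : α} (ha : a ∉ l₂) :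
    (shuffles (a :: l₁) l₂).filter (·.head? = some a) = (shuffles l₁ l₂).map (a :: ·) := by
  cases l₂ with
  | nil => simp
  | cons b l₂ =>
    simp [cons_shuffles_cons, filter_append, filter_map, Function.comp_def,
      ne_of_mem_of_not_mem mem_cons_self ha]

end List

open LaurentPolynomial (T T_add T_apply)
open scoped LaurentPolynomial

section GeneratingFunction

variable {α : Type*}

noncomputable def genFun (f : α → ℤ) (L : List α) : ℤ[T;T⁻¹] :=
  (L.map fun a => T (f a)).sum

@[simp] theorem genFun_nil (f : α → ℤ) : genFun f [] = 0 := rfl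

@[simp] theorem genFun_cons (f : α → ℤ) (a : α) (L : List α) :
    genFun f (a :: L) = T (f a) + genFun f L := by
  simp [genFun]

theorem genFun_append (f : α → ℤ) (L₁ L₂ : List α) :
    genFun f (L₁ ++ L₂) = genFun f L₁ + genFun f L₂ := by
  simp [genFun]

theorem genFun_map {β : Type*} (f : α → ℤ) (g : β → α) (L : List β) :
    genFun f (L.map g) = genFun (fun b => f (g b)) L := by
  simp [genFun, Function.comp_def]

theorem genFun_add_const (f : α → ℤ) (c : ℤ) (L : List α) :
    genFun (fun a => f a + c) L = T c * genFun f L := by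
  simp only [genFun, T_add, List.sum_map_mul_right]
  ring

theorem genFun_eq_add_mul_genFun_filter {f g : α → ℤ} {L : List α} (p : α → Bool) (c : ℤ)
    (h : ∀ a ∈ L, g a = f a + if p a then c else 0) :
    genFun g L = genFun f L + (T c - 1) * genFun f (L.filter p) := by
  induction L with
  | nil => simp
  | cons a L ih =>
    rw [List.forall_mem_cons] at h
    rw [genFun_cons, genFun_cons, ih h.2, h.1, T_add]
    cases hp : p a
    · rw [List.filter_cons_of_neg (by simp [hp])]
      simp only [Bool.false_eq_true, if_false, LaurentPolynomial.T_zero]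
      ring
    · rw [List.filter_cons_of_pos hp, genFun_cons]
      simp only [if_true]
      ring

theorem coeff_genFun (f : α → ℤ) (L : List α) (k : ℤ) :
    (genFun f L).coeff k = L.countP (fun a => f a = k) := by
  induction L with
  | nil => simp
  | cons a L ih =>
    rw [genFun_cons, AddMonoidAlgebra.coeff_add, Finsupp.add_apply, ih, T_apply,
      List.countP_cons]
    split_ifs <;> simp_all [add_comm]

end GeneratingFunction

theorem genFun_cons_shuffles_cons {α : Type*} [DecidableEq α] {f : List α → ℤ}
    {δ : α → α → ℤ} (hf : ∀ a b l, f (a :: b :: l) = f (b :: l) + δ a b)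
    {a b : α} {l₁ l₂ : List α} (ha : ∀ c ∈ l₁, δ a c = 0) (hb : ∀ c ∈ l₂, δ b c = 0)
    (hal₂ : a ∉ l₂) (hbl₁ : b ∉ l₁) :
    genFun f ((a :: l₁).shuffles (b :: l₂)) =
      genFun f (l₁.shuffles (b :: l₂)) + genFun f ((a :: l₁).shuffles l₂)
        + (T (δ a b) - 1) * genFun (fun l => f (b :: l)) (l₁.shuffles l₂)
        + (T (δ b a) - 1) * genFun (fun l => f (a :: l)) (l₁.shuffles l₂) := by
  have start_a : genFun (fun l => f (a :: l)) (l₁.shuffles (b :: l₂)) =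
      genFun f (l₁.shuffles (b :: l₂))
        + (T (δ a b) - 1) * genFun (fun l => f (b :: l)) (l₁.shuffles l₂) := by
    rw [← genFun_map f (b :: ·), ← List.filter_head?_shuffles_cons hbl₁]
    refine genFun_eq_add_mul_genFun_filter _ _ fun τ hτ => ?_
    rcases List.head?_of_mem_shuffles_cons hτ with h | ⟨c, hc, h⟩
    · obtain ⟨ρ, rfl⟩ := List.head?_eq_some_iff.1 h
      simp [hf]
    · obtain ⟨ρ, rfl⟩ := List.head?_eq_some_iff.1 h
      simp [hf, ha c hc, ne_of_mem_of_not_mem hc hbl₁]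
  have start_b : genFun (fun l => f (b :: l)) ((a :: l₁).shuffles l₂) =
      genFun f ((a :: l₁).shuffles l₂)
        + (T (δ b a) - 1) * genFun (fun l => f (a :: l)) (l₁.shuffles l₂) := by
    rw [← genFun_map f (a :: ·), ← List.filter_head?_cons_shuffles hal₂]
    refine genFun_eq_add_mul_genFun_filter _ _ fun τ hτ => ?_
    rcases List.head?_of_mem_cons_shuffles hτ with h | ⟨c, hc, h⟩
    · obtain ⟨ρ, rfl⟩ := List.head?_eq_some_iff.1 h
      simp [hf]
    · obtain ⟨ρ, rfl⟩ := List.head?_eq_some_iff.1 h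
      simp [hf, hb c hc, ne_of_mem_of_not_mem hc hal₂]
  rw [List.cons_shuffles_cons, genFun_append, genFun_map, genFun_map, start_a, start_b]
  ring

theorem isVert_cases {s : Step} (h : isVert s = true) : s = N ∨ s = S := by
  cases s <;> simp_all [isVert]

theorem isHoriz_cases {s : Step} (h : isHoriz s = true) : s = E ∨ s = W := by
  cases s <;> simp_all [isHoriz]

theorem isHoriz_eq_not_isVert (s : Step) : isHoriz s = !isVert s := by
  cases s <;> rfl

theorem notMem_of_isVert {s : Step} {l : List Step} (hs : isVert s = true)
    (hl : ∀ t ∈ l, isHoriz t = true) : s ∉ l := fun h => by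
  simpa [isHoriz_eq_not_isVert, hs] using hl s h

theorem notMem_of_isHoriz {s : Step} {l : List Step} (hs : isHoriz s = true)
    (hl : ∀ t ∈ l, isVert t = true) : s ∉ l := fun h => by
  simp [isHoriz_eq_not_isVert, hl s h] at hs

def shiftedInvert (σ : List Step) : ℤ := invert σ - σ.count S

theorem shiftedInvert_cons_cons (a b : Step) (l : List Step) :
    shiftedInvert (a :: b :: l) = shiftedInvert (b :: l)
      + ((if a = N then 1 else 0) - (if (a = E ∨ a = N) ∧ isVert b = true then 1 else 0)) := by
  cases a <;> cases b <;> simp [shiftedInvert, invert, pairs, isVert] <;> ring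

@[simp] theorem shiftedInvert_S_cons (l : List Step) : shiftedInvert (S :: l) = shiftedInvert l := by
  cases l with
  | nil => rfl
  | cons b l => simp [shiftedInvert_cons_cons]

@[simp] theorem shiftedInvert_W_cons (l : List Step) : shiftedInvert (W :: l) = shiftedInvert l := by
  cases l with
  | nil => rfl
  | cons b l => simp [shiftedInvert_cons_cons]

theorem shiftedInvert_N_cons (l : List Step) :
    shiftedInvert (N :: l) = shiftedInvert (E :: l) + 1 := by
  cases l with
  | nil => rfl
  | cons b l => simp only [shiftedInvert_cons_cons]; split_ifs <;> simp_all

theorem signedPeak_cons_cons (a b : Step) (l : List Step) :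
    signedPeak (a :: b :: l) = signedPeak (b :: l)
      + ((if a = N ∧ b = W then 1 else 0) - (if a = E ∧ b = S then 1 else 0)) := by
  cases a <;> cases b <;> simp [signedPeak, pairs] <;> ring

@[simp] theorem signedPeak_S_cons (l : List Step) : signedPeak (S :: l) = signedPeak l := by
  cases l with
  | nil => rfl
  | cons b l => simp [signedPeak_cons_cons]

@[simp] theorem signedPeak_W_cons (l : List Step) : signedPeak (W :: l) = signedPeak l := by
  cases l with
  | nil => rfl
  | cons b l => simp [signedPeak_cons_cons]

theorem shiftedInvert_eq_zero_of_isHoriz :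
    ∀ l : List Step, (∀ s ∈ l, isHoriz s = true) → shiftedInvert l = 0
  | [], _ => rfl
  | [a], h => by rcases isHoriz_cases (h a (by simp)) with rfl | rfl <;> rfl
  | a :: b :: l, h => by
    rw [shiftedInvert_cons_cons, shiftedInvert_eq_zero_of_isHoriz (b :: l) fun s hs =>
      h s (List.mem_cons_of_mem _ hs)]
    rcases isHoriz_cases (h a (by simp)) with rfl | rfl <;>
      rcases isHoriz_cases (h b (by simp)) with rfl | rfl <;> rfl

theorem shiftedInvert_eq_zero_of_isVert :
    ∀ l : List Step, (∀ s ∈ l, isVert s = true) → l.getLast? ≠ some N → shiftedInvert l = 0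
  | [], _, _ => rfl
  | [a], h, hN => by
    rcases isVert_cases (h a (by simp)) with rfl | rfl
    exacts [absurd rfl hN, rfl]
  | a :: b :: l, h, hN => by
    rw [shiftedInvert_cons_cons, shiftedInvert_eq_zero_of_isVert (b :: l)
      (fun s hs => h s (List.mem_cons_of_mem _ hs)) (by rwa [List.getLast?_cons_cons] at hN)]
    rcases isVert_cases (h a (by simp)) with rfl | rfl <;>
      rcases isVert_cases (h b (by simp)) with rfl | rfl <;> rfl

theorem signedPeak_eq_zero_of_isHoriz :
    ∀ l : List Step, (∀ s ∈ l, isHoriz s = true) → signedPeak l = 0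
  | [], _ | [_], _ => rfl
  | a :: b :: l, h => by
    rw [signedPeak_cons_cons, signedPeak_eq_zero_of_isHoriz (b :: l) fun s hs =>
      h s (List.mem_cons_of_mem _ hs)]
    rcases isHoriz_cases (h a (by simp)) with rfl | rfl <;>
      rcases isHoriz_cases (h b (by simp)) with rfl | rfl <;> rfl

theorem signedPeak_eq_zero_of_isVert :
    ∀ l : List Step, (∀ s ∈ l, isVert s = true) → signedPeak l = 0
  | [], _ | [_], _ => rfl
  | a :: b :: l, h => by
    rw [signedPeak_cons_cons, signedPeak_eq_zero_of_isVert (b :: l) fun s hs =>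
      h s (List.mem_cons_of_mem _ hs)]
    rcases isVert_cases (h a (by simp)) with rfl | rfl <;>
      rcases isVert_cases (h b (by simp)) with rfl | rfl <;> rfl

noncomputable def cornerWeight : Step → Step → ℤ[T;T⁻¹]
  | N, W => T 1 - 1
  | S, E => T (-1) - 1
  | _, _ => 0

section Recurrence

variable {x y : Step} {X Y : List Step}

theorem genFun_signedPeak_cons_shuffles_cons (hx : isVert x = true) (hy : isHoriz y = true)
    (hX : ∀ s ∈ X, isVert s = true) (hY : ∀ s ∈ Y, isHoriz s = true) :
    genFun signedPeak ((x :: X).shuffles (y :: Y)) =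
      genFun signedPeak (X.shuffles (y :: Y)) + genFun signedPeak ((x :: X).shuffles Y)
        + cornerWeight x y * genFun signedPeak (X.shuffles Y) := by
  rw [genFun_cons_shuffles_cons signedPeak_cons_cons (fun c hc => ?_) (fun c hc => ?_)
    (notMem_of_isVert hx hY) (notMem_of_isHoriz hy hX)]
  · rcases isVert_cases hx with rfl | rfl <;> rcases isHoriz_cases hy with rfl | rfl <;>
      simp [cornerWeight]
  · rcases isVert_cases hx with rfl | rfl <;> rcases isVert_cases (hX c hc) with rfl | rfl <;>
      rfl
  · rcases isHoriz_cases hy with rfl | rfl <;> rcases isHoriz_cases (hY c hc) with rfl | rfl <;>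
      rfl

theorem genFun_shiftedInvert_cons_shuffles_cons (hx : isVert x = true) (hy : isHoriz y = true)
    (hX : ∀ s ∈ X, isVert s = true) (hY : ∀ s ∈ Y, isHoriz s = true) :
    genFun shiftedInvert ((x :: X).shuffles (y :: Y)) =
      genFun shiftedInvert (X.shuffles (y :: Y)) + genFun shiftedInvert ((x :: X).shuffles Y)
        + cornerWeight x y * genFun shiftedInvert (X.shuffles Y) := by
  rw [genFun_cons_shuffles_cons shiftedInvert_cons_cons (fun c hc => ?_) (fun c hc => ?_)
    (notMem_of_isVert hx hY) (notMem_of_isHoriz hy hX)]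
  · rcases isVert_cases hx with rfl | rfl <;> rcases isHoriz_cases hy with rfl | rfl
    · have hNE : genFun (fun l => shiftedInvert (N :: l)) (X.shuffles Y) =
          T 1 * genFun (fun l => shiftedInvert (E :: l)) (X.shuffles Y) := by
        simp only [shiftedInvert_N_cons, genFun_add_const]
      have hT : (T (-1) * T 1 : ℤ[T;T⁻¹]) = 1 := by rw [← T_add]; rfl
      simp only [cornerWeight, isVert, hNE, ↓reduceIte, reduceCtorEq, or_true, or_false, and_self,
        and_false, Bool.false_eq_true, sub_zero, zero_sub, Int.reduceNeg, zero_mul, add_zero]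
      linear_combination (genFun (fun l => shiftedInvert (E :: l)) (X.shuffles Y)) * hT
    all_goals simp [cornerWeight, isVert]
  · rcases isVert_cases hx with rfl | rfl <;> rcases isVert_cases (hX c hc) with rfl | rfl <;>
      rfl
  · rcases isHoriz_cases hy with rfl | rfl <;> rcases isHoriz_cases (hY c hc) with rfl | rfl <;>
      rfl

end Recurrence

theorem genFun_shiftedInvert_shuffles_eq_genFun_signedPeak {X Y : List Step}
    (hX : ∀ s ∈ X, isVert s = true) (hXN : X.getLast? ≠ some N)
    (hY : ∀ s ∈ Y, isHoriz s = true) :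
    genFun shiftedInvert (X.shuffles Y) = genFun signedPeak (X.shuffles Y) := by
  induction X generalizing Y with
  | nil =>
    simp [shiftedInvert_eq_zero_of_isHoriz Y hY, signedPeak_eq_zero_of_isHoriz Y hY]
  | cons x X ihX =>
    have hx := hX x List.mem_cons_self
    have hX' : ∀ s ∈ X, isVert s = true := fun s hs => hX s (List.mem_cons_of_mem _ hs)
    have hXN' : X.getLast? ≠ some N := fun h => hXN (by simp [List.getLast?_cons, h])
    induction Y with
    | nil => simp [shiftedInvert_eq_zero_of_isVert _ hX hXN, signedPeak_eq_zero_of_isVert _ hX]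
    | cons y Y ihY =>
      have hy := hY y List.mem_cons_self
      have hY' : ∀ s ∈ Y, isHoriz s = true := fun s hs => hY s (List.mem_cons_of_mem _ hs)
      rw [genFun_shiftedInvert_cons_shuffles_cons hx hy hX' hY',
        genFun_signedPeak_cons_shuffles_cons hx hy hX' hY', ihX hX' hXN' hY, ihY hY',
        ihX hX' hXN' hY']

theorem ncard_setOf_isShuffle {V H : List Step} (hV : ∀ s ∈ V, isVert s = true)
    (hH : ∀ s ∈ H, isHoriz s = true) (f : List Step → ℤ) (k : ℤ) :
    {σ | IsShuffle V H σ ∧ f σ = k}.ncard = (V.shuffles H).countP (fun σ => f σ = k) := by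
  have hH' : ∀ s ∈ H, isVert s = false := fun s hs => by
    simpa [isHoriz_eq_not_isVert] using hH s hs
  have hnodup : (V.shuffles H).Nodup := List.nodup_shuffles fun a ha b hb h =>
    notMem_of_isVert (hV a ha) hH (h ▸ hb)
  have hset : {σ | IsShuffle V H σ ∧ f σ = k} =
      ↑((V.shuffles H).filter (fun σ => f σ = k)).toFinset := by
    ext σ
    simp [IsShuffle, List.mem_shuffles_iff hV hH', funext isHoriz_eq_not_isVert]
  rw [hset, Set.ncard_coe_finset, List.toFinset_card_of_nodup (hnodup.filter _),
    List.countP_eq_length_filter]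

theorem shifted_invert_equidistributed_signedPeak_general (V H : List Step)
    (hV : ∀ s ∈ V, isVert s = true)
    (hVlast : V.getLast? = some Step.S)
    (hH : ∀ s ∈ H, isHoriz s = true)
    (k : ℤ) :
    {σ : List Step | IsShuffle V H σ ∧ (invert σ : ℤ) - (σ.count Step.S : ℤ) = k}.ncard
      = {σ : List Step | IsShuffle V H σ ∧ signedPeak σ = k}.ncard := by
  have hgenFun := genFun_shiftedInvert_shuffles_eq_genFun_signedPeak hV (by simp [hVlast]) hH
  have hcount := congrArg (·.coeff k) hgenFun
  simp only [coeff_genFun, Nat.cast_inj] at hcount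
  exact (ncard_setOf_isShuffle hV hH shiftedInvert k).trans
    (hcount.trans (ncard_setOf_isShuffle hV hH signedPeak k).symm)

/-- **Proposition (equidistribution of shifted In-Vert and signed peak-count).**
If `V` is a nonempty vertical path ending in `S` and `H` is a horizontal path, then for
every integer `k` the number of shuffles of `V` and `H` with shifted In-Vert `k` equals
the number of shuffles of `V` and `H` with signed peak-count `k`. -/
theorem shifted_invert_equidistributed_signedPeak (V H : List Step)
    (hV : ∀ s ∈ V, isVert s = true) (hVne : V ≠ [])
    (hVlast : V.getLast? = some Step.S)
    (hH : ∀ s ∈ H, isHoriz s = true)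
    (k : ℤ) :
    {σ : List Step | IsShuffle V H σ ∧ (invert σ : ℤ) - (σ.count Step.S : ℤ) = k}.ncard
      = {σ : List Step | IsShuffle V H σ ∧ signedPeak σ = k}.ncard :=
  shifted_invert_equidistributed_signedPeak_general V H hV hVlast hH k
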